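/- Let K = ℚ(√−3) and let i ∈ F denote a square root of −1. For every nonzero a ∈ K, there is no element w ∈ F with w⁴ = a·i. (That is, the square root of a·i is never a square in F.) -/

import Mathlib

/-! Every `K`-automorphism of `F` is an involution, since it sends a square root of an element
of `K` to plus or minus itself. Some `σ ∈ Gal(F/K)` acts on the primitive 8th roots of unity by
`η ↦ η³`: extend `ζ ↦ ζ¹⁹` for a primitive 24th root of unity `ζ`, which fixes `ζ⁸` and hence
`√−3`. Then `σ i = −i`, so if `w⁴ = a i`, the quotient `u = σ w / w` has `u⁴ = −1`. Now `σ² = 1`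
gives `σ u = u⁻¹`, while `σ u = u³`, so `u⁴ = 1`, which is absurd. -/

open IntermediateField

/-- `K = ℚ(√−3)`, realized as a subfield of `ℂ`. -/
noncomputable def K : IntermediateField ℚ ℂ := ℚ⟮(Complex.I * Real.sqrt 3 : ℂ)⟯

/-- `F`, the maximal elementary abelian 2-extension of `K` inside an algebraic closure, i.e.
the subfield generated over `K` by the square roots of all elements of `K`. -/
noncomputable def F : IntermediateField K ℂ :=
  IntermediateField.adjoin K {x : ℂ | ∃ a : K, x ^ 2 = (a : ℂ)}

open Polynomial

section Involution

variable {L : Type*} [Field L] {τ : L →+* L} {ζ : L}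

theorem map_eq_pow_three_of_pow_eight_eq_one (hζ : IsPrimitiveRoot ζ 8) (hτζ : τ ζ = ζ ^ 3)
    {u : L} (hu : u ^ 8 = 1) : τ u = u ^ 3 := by
  obtain ⟨k, -, rfl⟩ := hζ.eq_pow_of_pow_eq_one hu
  rw [map_pow, hτζ, ← pow_mul, ← pow_mul, mul_comm]

theorem not_exists_pow_four_eq_of_map_eq_neg (hτ : Function.Involutive τ)
    (hζ : IsPrimitiveRoot ζ 8) (hτζ : τ ζ = ζ ^ 3) {c : L} (hc : c ≠ 0) (hτc : τ c = -c) :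
    ¬ ∃ w, w ^ 4 = c := by
  rintro ⟨w, rfl⟩
  have hw : w ≠ 0 := by rintro rfl; simp at hc
  set u := τ w / w
  have hu4 : u ^ 4 = -1 := by
    rw [div_pow, ← map_pow, hτc, neg_div, div_self (pow_ne_zero 4 hw)]
  have hu_inv : τ u = u⁻¹ := by rw [map_div₀, hτ w, inv_div]
  have hu3 : τ u = u ^ 3 := map_eq_pow_three_of_pow_eight_eq_one hζ hτζ <| by
    rw [show 8 = 4 * 2 by rfl, pow_mul, hu4]; norm_num
  have hu0 : u ≠ 0 := by intro h; simp [h] at hu4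
  have hu4' : u ^ 4 = 1 := by
    rw [pow_succ, ← hu3, hu_inv, inv_mul_cancel₀ hu0]
  have hζ4 : IsPrimitiveRoot (ζ ^ 4) 2 := hζ.pow (by norm_num) rfl
  exact hζ4.ne_one one_lt_two (hζ4.eq_neg_one_of_two_right.trans (hu4.symm.trans hu4'))

theorem map_eq_neg_of_sq_eq_neg_one (hζ : IsPrimitiveRoot ζ 8) (hτζ : τ ζ = ζ ^ 3) {i : L}
    (hi : i ^ 2 = -1) : τ i = -i := by
  have hi8 : i ^ 8 = 1 := by rw [show 8 = 2 * 4 by rfl, pow_mul, hi]; norm_num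
  rw [map_eq_pow_three_of_pow_eight_eq_one hζ hτζ hi8, pow_succ, hi, neg_one_mul]

theorem not_exists_pow_four_eq_mul_of_sq_eq_neg_one (hτ : Function.Involutive τ)
    (hζ : IsPrimitiveRoot ζ 8) (hτζ : τ ζ = ζ ^ 3) {a i : L} (ha : a ≠ 0) (hτa : τ a = a)
    (hi : i ^ 2 = -1) : ¬ ∃ w, w ^ 4 = a * i := by
  have hi0 : i ≠ 0 := by rintro rfl; simp at hi
  refine not_exists_pow_four_eq_of_map_eq_neg hτ hζ hτζ (mul_ne_zero ha hi0) ?_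
  rw [map_mul, hτa, map_eq_neg_of_sq_eq_neg_one hζ hτζ hi, mul_neg]

end Involution

theorem F_eq_iSup_adjoin_rootSet :
    F = ⨆ a : K, adjoin K ((X ^ 2 - C a).rootSet ℂ) := by
  rw [F, ← adjoin_iUnion]
  congr 1
  ext x
  simp [mem_rootSet, X_pow_sub_C_ne_zero two_pos, sub_eq_zero]

instance : Normal K F := by
  rw [F_eq_iSup_adjoin_rootSet]
  have (a : K) : Normal K (adjoin K ((X ^ 2 - C a).rootSet ℂ)) :=
    Normal.of_isSplittingField (hFEp := adjoin_rootSet_isSplittingField (IsAlgClosed.splits _))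
  infer_instance

theorem algHom_F_involutive (σ : F →ₐ[K] F) : Function.Involutive σ := by
  suffices σ.comp σ = AlgHom.id K F from fun x ↦ DFunLike.congr_fun this x
  refine algHom_ext_of_eq_adjoin K (S := F) rfl fun x ⟨a, ha⟩ ↦ ?_
  set y : F := ⟨x, _⟩
  have hy : σ (y ^ 2) = y ^ 2 := by
    rw [show y ^ 2 = algebraMap K F a from Subtype.ext ha, σ.commutes]
  rcases sq_eq_sq_iff_eq_or_eq_neg.mp ((map_pow σ y 2).symm.trans hy) with h | h <;>
    simp [h]

instance : FiniteDimensional ℚ K := by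
  refine adjoin.finiteDimensional (.of_pow two_pos ?_)
  rw [show (Complex.I * Real.sqrt 3 : ℂ) ^ 2 = algebraMap ℚ ℂ (-3) by
    simp [mul_pow, ← Complex.ofReal_pow]]
  exact isIntegral_algebraMap

theorem mem_F_of_sq_mem {x : ℂ} (h : x ^ 2 ∈ K) : x ∈ F := subset_adjoin _ _ ⟨⟨_, h⟩, rfl⟩

theorem mem_F_of_pow_four_eq_neg_one {η : ℂ} (hη : η ^ 4 = -1) : η ∈ F := by
  have hη8 : η ^ 8 = 1 := by rw [show 8 = 4 * 2 by rfl, pow_mul, hη]; norm_num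
  have hi : (η ^ 2) ^ 2 = -1 := by rw [← pow_mul, hη]
  have hs : (η + η ^ 7) ^ 2 = 2 := by linear_combination (2 - η ^ 2) * hη8 + η ^ 10 * hη
  have hs0 : η + η ^ 7 ≠ 0 := by
    intro h; rw [h] at hs; norm_num at hs
  rw [show η = (η ^ 2 + 1) / (η + η ^ 7) by rw [eq_div_iff hs0]; linear_combination hη8]
  refine div_mem (add_mem (mem_F_of_sq_mem ?_) (one_mem F)) (mem_F_of_sq_mem ?_)
  · rw [hi]; exact neg_mem (one_mem K)
  · rw [hs]; exact ofNat_mem K 2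

section PrimitiveRoot

variable {ζ : ℂ} (hζ : IsPrimitiveRoot ζ 24)
include hζ

theorem two_mul_pow_eight_add_one_eq_or_eq_neg :
    2 * ζ ^ 8 + 1 = Complex.I * Real.sqrt 3 ∨ 2 * ζ ^ 8 + 1 = -(Complex.I * Real.sqrt 3) := by
  have hω := (hζ.pow (a := 8) (b := 3) (by norm_num) rfl).geom_sum_eq_zero (by norm_num)
  simp only [Finset.sum_range_succ, Finset.sum_range_zero] at hω
  refine sq_eq_sq_iff_eq_or_eq_neg.mp ?_
  rw [mul_pow, Complex.I_sq, ← Complex.ofReal_pow, Real.sq_sqrt (by norm_num)]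
  push_cast
  linear_combination 4 * hω

theorem pow_eight_mem_K : ζ ^ 8 ∈ K := by
  have hg : (Complex.I * Real.sqrt 3 : ℂ) ∈ K := mem_adjoin_simple_self ℚ _
  rcases two_mul_pow_eight_add_one_eq_or_eq_neg hζ with h | h
  · rw [show ζ ^ 8 = (Complex.I * Real.sqrt 3 - 1) / 2 by linear_combination h / 2]
    exact div_mem (sub_mem hg (one_mem K)) (ofNat_mem K 2)
  · rw [show ζ ^ 8 = (-(Complex.I * Real.sqrt 3) - 1) / 2 by linear_combination h / 2]
    exact div_mem (sub_mem (neg_mem hg) (one_mem K)) (ofNat_mem K 2)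

theorem mem_F : ζ ∈ F := by
  have h12 : ζ ^ 12 = -1 := (hζ.pow (a := 12) (b := 2) (by norm_num) rfl).eq_neg_one_of_two_right
  have hζ3 : ζ ^ 3 ∈ F := mem_F_of_pow_four_eq_neg_one (by rw [← pow_mul, h12])
  have hζ8 : ζ ^ 8 ∈ F := IntermediateField.algebraMap_mem F (⟨_, pow_eight_mem_K hζ⟩ : K)
  rw [show ζ = (ζ ^ 3) ^ 3 / ζ ^ 8 by
    rw [eq_div_iff (pow_ne_zero _ (hζ.ne_zero (by norm_num)))]; ring]
  exact div_mem (pow_mem hζ3 3) hζ8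

theorem exists_algHom_F_map_eq_pow_nineteen : ∃ τ : F →ₐ[ℚ] ℂ, τ ⟨ζ, mem_F hζ⟩ = ζ ^ 19 := by
  have : Algebra.IsAlgebraic ℚ F := .trans ℚ K F
  refine exists_algHom_of_splits_of_aeval
    (fun s ↦ ⟨Algebra.IsIntegral.isIntegral s, IsAlgClosed.splits _⟩) ?_
  rw [← minpoly.algebraMap_eq (algebraMap F ℂ).injective]
  change aeval _ (minpoly ℚ ζ) = 0
  rw [← cyclotomic_eq_minpoly_rat hζ (by norm_num), aeval_def, eval₂_eq_eval_map, map_cyclotomic]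
  exact (hζ.pow_of_coprime 19 (by norm_num)).isRoot_cyclotomic (by norm_num)

theorem map_algebraMap_K_of_map_eq_pow_nineteen {τ : F →ₐ[ℚ] ℂ}
    (hτ : τ ⟨ζ, mem_F hζ⟩ = ζ ^ 19) (k : K) : τ (algebraMap K F k) = k := by
  suffices τ.comp (IsScalarTower.toAlgHom ℚ K F) = K.val from DFunLike.congr_fun this k
  refine algHom_ext_of_eq_adjoin ℚ (S := K) rfl fun x hx ↦ ?_
  rw [Set.mem_singleton_iff] at hx
  subst hx
  set z : F := ⟨ζ, mem_F hζ⟩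
  have hτω : τ (2 * z ^ 8 + 1) = 2 * ζ ^ 8 + 1 := by
    rw [map_add, map_mul, map_pow, hτ, map_ofNat, map_one, ← pow_mul,
      show 19 * 8 = 24 * 6 + 8 by rfl, pow_add, pow_mul, hζ.pow_eq_one, one_pow, one_mul]
  change τ (algebraMap K F ⟨_, _⟩) = Complex.I * Real.sqrt 3
  rcases two_mul_pow_eight_add_one_eq_or_eq_neg hζ with h | h
  · rw [show algebraMap K F ⟨_, _⟩ = 2 * z ^ 8 + 1 from Subtype.ext (by push_cast; exact h.symm),
      hτω, h]
  · rw [show algebraMap K F ⟨_, _⟩ = -(2 * z ^ 8 + 1) from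
      Subtype.ext (by push_cast; exact neg_eq_iff_eq_neg.mp h.symm), map_neg, hτω, h, neg_neg]

end PrimitiveRoot

theorem exists_algHom_F_map_eq_pow_three :
    ∃ (σ : F →ₐ[K] F) (η : F), IsPrimitiveRoot η 8 ∧ σ η = η ^ 3 := by
  obtain ⟨ζ, hζ⟩ : ∃ ζ : ℂ, IsPrimitiveRoot ζ 24 :=
    ⟨_, Complex.isPrimitiveRoot_exp 24 (by norm_num)⟩
  obtain ⟨τ, hτ⟩ := exists_algHom_F_map_eq_pow_nineteen hζ
  let τK : F →ₐ[K] ℂ :=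
    { τ.toRingHom with commutes' := map_algebraMap_K_of_map_eq_pow_nineteen hζ hτ }
  set z : F := ⟨ζ, mem_F hζ⟩
  refine ⟨τK.restrictNormal F, z ^ 3, ?_, Subtype.ext ((τK.restrictNormal_commutes F _).trans ?_)⟩
  · exact (IsPrimitiveRoot.map_iff_of_injective (algebraMap F ℂ).injective).mp
      (hζ.pow (a := 3) (b := 8) (by norm_num) rfl)
  · change τ (z ^ 3) = (ζ ^ 3) ^ 3
    rw [map_pow, hτ, ← pow_mul, ← pow_mul, show 19 * 3 = 24 * 2 + 3 * 3 by rfl, pow_add, pow_mul,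
      hζ.pow_eq_one, one_pow, one_mul]

theorem sqrt_ai_not_square_in_F (I : F) (hI : I ^ 2 = -1) (a : K) (ha : a ≠ 0) :
    ¬ ∃ w : F, w ^ 4 = algebraMap K F a * I := by
  obtain ⟨σ, η, hη, hση⟩ := exists_algHom_F_map_eq_pow_three
  exact not_exists_pow_four_eq_mul_of_sq_eq_neg_one (τ := (σ : F →+* F)) (algHom_F_involutive σ)
    hη hση ((_root_.map_ne_zero _).mpr ha) (σ.commutes a) hI
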